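/- Let γ₁ = (0 4)(1 2)(3 5)(6 10)(7 9)(8 11) and γ₂ = (0 7)(1 8)(2 11)(3 10)(4 9)(5 6) be permutations of {0,…,11}. Then γ₁ and γ₂ commute, each has order 2, γ₁ ≠ γ₂, and the subgroup they generate has exactly 4 elements and is isomorphic to ℤ/2 × ℤ/2. -/
import Mathlib


open Equiv

/-- γ₁ = (0 4)(1 2)(3 5)(6 10)(7 9)(8 11) -/
def knoGamma1 : Equiv.Perm (Fin 12) :=
  swap 0 4 * swap 1 2 * swap 3 5 * swap 6 10 * swap 7 9 * swap 8 11

/-- γ₂ = (0 7)(1 8)(2 11)(3 10)(4 9)(5 6) -/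
def knoGamma2 : Equiv.Perm (Fin 12) :=
  swap 0 7 * swap 1 8 * swap 2 11 * swap 3 10 * swap 4 9 * swap 5 6

/-- The Klein four subgroup as an explicit subgroup. -/
def knoK : Subgroup (Equiv.Perm (Fin 12)) where
  carrier := ↑({1, knoGamma1, knoGamma2, knoGamma1 * knoGamma2} : Finset (Equiv.Perm (Fin 12)))
  one_mem' := by decide
  mul_mem' := by
    intro a b ha hb
    simp only [Finset.coe_insert, Set.mem_insert_iff, Finset.coe_singleton,
      Set.mem_singleton_iff] at ha hb ⊢
    rcases ha with rfl | rfl | rfl | rfl <;> rcases hb with rfl | rfl | rfl | rfl <;> decide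
  inv_mem' := by
    intro a ha
    simp only [Finset.coe_insert, Set.mem_insert_iff, Finset.coe_singleton,
      Set.mem_singleton_iff] at ha ⊢
    rcases ha with rfl | rfl | rfl | rfl <;> decide

lemma closure_eq_knoK :
    Subgroup.closure ({knoGamma1, knoGamma2} : Set (Equiv.Perm (Fin 12))) = knoK := by
  apply le_antisymm
  · rw [Subgroup.closure_le]
    intro x hx
    rcases hx with rfl | rfl <;>
      simp only [knoK, Subgroup.coe_set_mk, Finset.coe_insert, Set.mem_insert_iff,
        Finset.coe_singleton, Set.mem_singleton_iff] <;> tauto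
  · intro x hx
    have h1 : knoGamma1 ∈ Subgroup.closure ({knoGamma1, knoGamma2} : Set (Equiv.Perm (Fin 12))) :=
      Subgroup.subset_closure (by left; rfl)
    have h2 : knoGamma2 ∈ Subgroup.closure ({knoGamma1, knoGamma2} : Set (Equiv.Perm (Fin 12))) :=
      Subgroup.subset_closure (by right; rfl)
    have hx' : x = 1 ∨ x = knoGamma1 ∨ x = knoGamma2 ∨ x = knoGamma1 * knoGamma2 := by
      simpa [knoK, Subgroup.mem_mk] using hx
    rcases hx' with rfl | rfl | rfl | rfl
    · exact Subgroup.one_mem _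
    · exact h1
    · exact h2
    · exact Subgroup.mul_mem _ h1 h2

lemma knoK_card : Nat.card knoK = 4 := by
  have e : Nat.card knoK = Nat.card
      ((({1, knoGamma1, knoGamma2, knoGamma1 * knoGamma2} :
        Finset (Equiv.Perm (Fin 12))) : Set (Equiv.Perm (Fin 12)))) :=
    Nat.card_congr (Equiv.subtypeEquivRight (fun x => by
      simp [knoK, Subgroup.mem_mk]))
  rw [e, Nat.card_coe_set_eq, Set.ncard_coe_finset]
  decide

lemma knoK_sq (x : knoK) : x ^ 2 = 1 := by
  have hx' : (x : Equiv.Perm (Fin 12)) = 1 ∨ (x : Equiv.Perm (Fin 12)) = knoGamma1 ∨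
      (x : Equiv.Perm (Fin 12)) = knoGamma2 ∨
      (x : Equiv.Perm (Fin 12)) = knoGamma1 * knoGamma2 := by
    simpa [knoK, Subgroup.mem_mk] using x.2
  apply Subtype.ext
  push_cast
  rcases hx' with h | h | h | h <;> rw [h] <;> decide

lemma knoK_exponent : Monoid.exponent knoK = 2 := by
  have hdvd : Monoid.exponent knoK ∣ 2 := Monoid.exponent_dvd_of_forall_pow_eq_one knoK_sq
  have hg1 : knoGamma1 ∈ knoK := by
    simp only [knoK, Subgroup.mem_mk, Finset.coe_insert, Set.mem_insert_iff,
      Finset.coe_singleton, Set.mem_singleton_iff]; tauto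
  have hne : (⟨knoGamma1, hg1⟩ : knoK) ≠ 1 := by
    intro h
    have : knoGamma1 = 1 := congrArg Subtype.val h
    revert this; decide
  have h2 : orderOf (⟨knoGamma1, hg1⟩ : knoK) = 2 := by
    have hsq : (⟨knoGamma1, hg1⟩ : knoK) ^ 2 = 1 := knoK_sq _
    have := orderOf_eq_prime hsq hne
    exact this
  have hdvd2 : 2 ∣ Monoid.exponent knoK := h2 ▸ Monoid.order_dvd_exponent _
  exact Nat.dvd_antisymm hdvd hdvd2

instance : IsKleinFour knoK := ⟨knoK_card, knoK_exponent⟩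

theorem stmt14 :
    knoGamma1 * knoGamma2 = knoGamma2 * knoGamma1 ∧
    orderOf knoGamma1 = 2 ∧ orderOf knoGamma2 = 2 ∧ knoGamma1 ≠ knoGamma2 ∧
    Nat.card (Subgroup.closure ({knoGamma1, knoGamma2} : Set (Equiv.Perm (Fin 12)))) = 4 ∧
    Nonempty ((Subgroup.closure ({knoGamma1, knoGamma2} : Set (Equiv.Perm (Fin 12)))) ≃*
      Multiplicative (ZMod 2 × ZMod 2)) := by
  refine ⟨by decide, ?_, ?_, by decide, ?_, ?_⟩
  · exact orderOf_eq_prime (by decide) (by decide)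
  · exact orderOf_eq_prime (by decide) (by decide)
  · rw [closure_eq_knoK]; exact knoK_card
  · rw [closure_eq_knoK]; exact IsKleinFour.nonempty_mulEquiv
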